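/- In the sample selection setup with strong monotonicity, let q ∈ ℝ satisfy P(Y ≤ q | D=1, S=1) = p₀ and P(Y = q | D=1, S=1) = 0. Then the always-taker average treatment effect satisfies E[Y₁ − Y₀ | S₁ = 1, S₀ = 1] ≥ E[Y | D=1, S=1, Y ≤ q] − E[Y | D=0, S=1]. -/

import Mathlib

/-!
By independence of `D` from the potential variables, conditioning on the treatment arm changes
neither conditional means nor ratios of probabilities of events in the potential variables. So the
selected treated trimmed at `q` behave like `{S₁ = 1, Y₁ ≤ q}`, the selected controls like
`{S₀ = 1}`, which by monotonicity is a.e. the always-taker set `{S₁ = 1, S₀ = 1}`, and the quantile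
condition says that these two sets have equal mass. Outside their intersection the trimmed set has
`Y₁ ≤ q` and the always-taker set has `Y₁ > q`, so the trimmed mean of `Y₁` is the smaller one.
-/

open MeasureTheory ProbabilityTheory

/-- Conditional mean `E[X | A] = (∫_A X dP) / P(A)`. -/
noncomputable def condMean {Ω : Type*} [MeasurableSpace Ω] (P : Measure Ω)
    (A : Set Ω) (X : Ω → ℝ) : ℝ :=
  (∫ ω in A, X ω ∂P) / (P A).toReal

open Set

section Trimming

variable {Ω : Type*} [MeasurableSpace Ω] {P : Measure Ω} [IsFiniteMeasure P]
  {E B : Set Ω} {f : Ω → ℝ} {q : ℝ}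

lemma setIntegral_le_setIntegral_of_measure_eq (hE : MeasurableSet E) (hB : MeasurableSet B)
    (hf : Integrable f P) (hlow : ∀ ω ∈ E \ B, f ω ≤ q) (hhigh : ∀ ω ∈ B \ E, q ≤ f ω)
    (hm : P E = P B) : ∫ ω in E, f ω ∂P ≤ ∫ ω in B, f ω ∂P := by
  have hsdiff : P.real (E \ B) = P.real (B \ E) := by
    have hEB := measureReal_inter_add_sdiff (μ := P) (s := E) hB
    have hBE := measureReal_inter_add_sdiff (μ := P) (s := B) hE
    rw [inter_comm B E, measureReal_def P B, ← hm, ← measureReal_def] at hBE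
    linarith
  calc ∫ ω in E, f ω ∂P = ∫ ω in E ∩ B, f ω ∂P + ∫ ω in E \ B, f ω ∂P :=
        (integral_inter_add_sdiff hB hf.integrableOn).symm
    _ ≤ ∫ ω in E ∩ B, f ω ∂P + q * P.real (E \ B) := by
        gcongr
        calc ∫ ω in E \ B, f ω ∂P ≤ ∫ _ in E \ B, q ∂P :=
              setIntegral_mono_on hf.integrableOn (integrableOn_const (measure_ne_top _ _))
                (hE.diff hB) hlow
          _ = q * P.real (E \ B) := by rw [setIntegral_const, smul_eq_mul, mul_comm]
    _ = ∫ ω in B ∩ E, f ω ∂P + q * P.real (B \ E) := by rw [hsdiff, inter_comm]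
    _ ≤ ∫ ω in B ∩ E, f ω ∂P + ∫ ω in B \ E, f ω ∂P := by
        gcongr
        exact setIntegral_ge_of_const_le_real (hB.diff hE) (measure_ne_top _ _) hhigh
          hf.integrableOn
    _ = ∫ ω in B, f ω ∂P := integral_inter_add_sdiff hE hf.integrableOn

lemma condMean_le_condMean_of_measure_eq (hE : MeasurableSet E) (hB : MeasurableSet B)
    (hf : Integrable f P) (hlow : ∀ ω ∈ E \ B, f ω ≤ q) (hhigh : ∀ ω ∈ B \ E, q ≤ f ω)
    (hm : P E = P B) : condMean P E f ≤ condMean P B f := by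
  unfold condMean
  rw [hm]
  exact div_le_div_of_nonneg_right
    (setIntegral_le_setIntegral_of_measure_eq hE hB hf hlow hhigh hm) ENNReal.toReal_nonneg

end Trimming

section CondMean

variable {Ω : Type*} [MeasurableSpace Ω] {P : Measure Ω} {A B : Set Ω} {X X' : Ω → ℝ}

lemma condMean_congr_ae (h : A =ᵐ[P] B) : condMean P A X = condMean P B X := by
  rw [condMean, condMean, setIntegral_congr_set h, measure_congr h]

lemma condMean_congr_fun (hA : MeasurableSet A) (h : EqOn X X' A) :
    condMean P A X = condMean P A X' := by
  rw [condMean, condMean, setIntegral_congr_fun hA h]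

lemma condMean_sub (hX : Integrable X P) (hX' : Integrable X' P) :
    condMean P A (fun ω => X ω - X' ω) = condMean P A X - condMean P A X' := by
  rw [condMean, condMean, condMean, integral_sub hX.integrableOn hX'.integrableOn, sub_div]

end CondMean

section Independence

variable {Ω α β : Type*} [MeasurableSpace Ω] [MeasurableSpace α] [MeasurableSpace β]
  {P : Measure Ω} {d : Ω → α} {W : Ω → β} {A : Set α}

lemma setIntegral_preimage_eq_mul_integral_of_indepFun {X : Ω → ℝ} (hindep : IndepFun d X P)
    (hd : Measurable d) (hA : MeasurableSet A) (hX : AEStronglyMeasurable X P) :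
    ∫ ω in d ⁻¹' A, X ω ∂P = P.real (d ⁻¹' A) * ∫ ω, X ω ∂P := by
  have hindA : IndepFun (fun ω => A.indicator (1 : α → ℝ) (d ω)) X P :=
    hindep.comp (measurable_one.indicator hA) measurable_id
  have hmul : (d ⁻¹' A).indicator X = fun ω => A.indicator 1 (d ω) * X ω := by
    ext ω
    by_cases h : d ω ∈ A <;> simp [h]
  rw [← integral_indicator (hd hA), hmul, hindA.integral_fun_mul_eq_mul_integral
    ((measurable_one.indicator hA).comp hd).aestronglyMeasurable hX,
    ← integral_indicator_one (hd hA)]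
  rfl

lemma condMean_inter_preimage_of_indepFun [IsFiniteMeasure P] {B : Set β} {g : β → ℝ}
    (hindep : IndepFun d W P) (hd : Measurable d) (hW : Measurable W) (hA : MeasurableSet A)
    (hB : MeasurableSet B) (hg : Measurable g) (hA0 : P (d ⁻¹' A) ≠ 0) :
    condMean P (d ⁻¹' A ∩ W ⁻¹' B) (fun ω => g (W ω))
      = condMean P (W ⁻¹' B) (fun ω => g (W ω)) := by
  have hind : (W ⁻¹' B).indicator (fun ω => g (W ω)) = fun ω => B.indicator g (W ω) := by
    ext ω
    by_cases h : W ω ∈ B <;> simp [h]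
  have hint : ∫ ω in d ⁻¹' A ∩ W ⁻¹' B, g (W ω) ∂P
      = P.real (d ⁻¹' A) * ∫ ω in W ⁻¹' B, g (W ω) ∂P := by
    rw [← setIntegral_indicator (hW hB), ← integral_indicator (hW hB), hind]
    exact setIntegral_preimage_eq_mul_integral_of_indepFun
      (hindep.comp measurable_id (hg.indicator hB)) hd hA
      ((hg.indicator hB).comp hW).aestronglyMeasurable
  rw [condMean, condMean, hint, hindep.measure_inter_preimage_eq_mul _ _ hA hB,
    ENNReal.toReal_mul, measureReal_def,
    mul_div_mul_left _ _ (ENNReal.toReal_ne_zero.2 ⟨hA0, measure_ne_top _ _⟩)]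

lemma measure_inter_preimage_div_of_indepFun [IsFiniteMeasure P] {B C : Set β}
    (hindep : IndepFun d W P) (hA : MeasurableSet A) (hB : MeasurableSet B) (hC : MeasurableSet C)
    (hA0 : P (d ⁻¹' A) ≠ 0) :
    (P (d ⁻¹' A ∩ W ⁻¹' B)).toReal / (P (d ⁻¹' A ∩ W ⁻¹' C)).toReal
      = (P (W ⁻¹' B)).toReal / (P (W ⁻¹' C)).toReal := by
  rw [hindep.measure_inter_preimage_eq_mul _ _ hA hB,
    hindep.measure_inter_preimage_eq_mul _ _ hA hC, ENNReal.toReal_mul, ENNReal.toReal_mul,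
    mul_div_mul_left _ _ (ENNReal.toReal_ne_zero.2 ⟨hA0, measure_ne_top _ _⟩)]

end Independence

section SampleSelection

variable {Ω : Type*} {Y1 Y0 : Ω → ℝ} {s1 s0 d : Ω → Bool}

lemma treated_trimmed_eq_inter_preimage (q : ℝ) :
    {ω | d ω = true ∧ (if d ω then s1 ω else s0 ω) = true ∧ (if d ω then Y1 ω else Y0 ω) ≤ q}
      = d ⁻¹' {true}
        ∩ (fun ω => (Y1 ω, Y0 ω, s1 ω, s0 ω)) ⁻¹' {w | w.2.2.1 = true ∧ w.1 ≤ q} := by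
  ext ω
  cases h : d ω <;> simp [h]

variable [MeasurableSpace Ω] {P : Measure Ω} [IsFiniteMeasure P]

lemma condMean_treated_trimmed (hd : Measurable d)
    (hW : Measurable fun ω => (Y1 ω, Y0 ω, s1 ω, s0 ω))
    (hindep : IndepFun d (fun ω => (Y1 ω, Y0 ω, s1 ω, s0 ω)) P)
    (htreated : P {ω | d ω = true} ≠ 0) (q : ℝ) :
    condMean P {ω | d ω = true ∧ (if d ω then s1 ω else s0 ω) = true
        ∧ (if d ω then Y1 ω else Y0 ω) ≤ q} (fun ω => if d ω then Y1 ω else Y0 ω)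
      = condMean P {ω | s1 ω = true ∧ Y1 ω ≤ q} Y1 := by
  have hB : MeasurableSet {w : ℝ × ℝ × Bool × Bool | w.2.2.1 = true ∧ w.1 ≤ q} := by
    measurability
  rw [treated_trimmed_eq_inter_preimage, condMean_congr_fun (X' := Y1)
    ((hd (measurableSet_singleton _)).inter (hW hB))
    (fun ω hω => by simp [show d ω = true from hω.1])]
  exact condMean_inter_preimage_of_indepFun hindep hd hW (measurableSet_singleton _) hB
    measurable_fst htreated

lemma condMean_control_selected (hd : Measurable d)
    (hW : Measurable fun ω => (Y1 ω, Y0 ω, s1 ω, s0 ω))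
    (hindep : IndepFun d (fun ω => (Y1 ω, Y0 ω, s1 ω, s0 ω)) P)
    (hcontrol : P {ω | d ω = false} ≠ 0) :
    condMean P {ω | d ω = false ∧ (if d ω then s1 ω else s0 ω) = true}
        (fun ω => if d ω then Y1 ω else Y0 ω)
      = condMean P {ω | s0 ω = true} Y0 := by
  have hset : {ω | d ω = false ∧ (if d ω then s1 ω else s0 ω) = true}
      = d ⁻¹' {false} ∩ (fun ω => (Y1 ω, Y0 ω, s1 ω, s0 ω)) ⁻¹' {w | w.2.2.2 = true} := by
    ext ω
    cases h : d ω <;> simp [h]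
  have hB : MeasurableSet {w : ℝ × ℝ × Bool × Bool | w.2.2.2 = true} := by measurability
  rw [hset, condMean_congr_fun (X' := Y0) ((hd (measurableSet_singleton _)).inter (hW hB))
    (fun ω hω => by simp [show d ω = false from hω.1])]
  exact condMean_inter_preimage_of_indepFun (g := fun w => w.2.1) hindep hd hW
    (measurableSet_singleton _) hB (by fun_prop) hcontrol

lemma measure_treated_trimmed_div
    (hindep : IndepFun d (fun ω => (Y1 ω, Y0 ω, s1 ω, s0 ω)) P)
    (htreated : P {ω | d ω = true} ≠ 0) (q : ℝ) :
    (P {ω | d ω = true ∧ (if d ω then s1 ω else s0 ω) = true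
        ∧ (if d ω then Y1 ω else Y0 ω) ≤ q}).toReal
      / (P {ω | d ω = true ∧ (if d ω then s1 ω else s0 ω) = true}).toReal
      = (P {ω | s1 ω = true ∧ Y1 ω ≤ q}).toReal / (P {ω | s1 ω = true}).toReal := by
  have hselected : {ω | d ω = true ∧ (if d ω then s1 ω else s0 ω) = true}
      = d ⁻¹' {true} ∩ (fun ω => (Y1 ω, Y0 ω, s1 ω, s0 ω)) ⁻¹' {w | w.2.2.1 = true} := by
    ext ω
    cases h : d ω <;> simp [h]
  rw [treated_trimmed_eq_inter_preimage, hselected]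
  exact measure_inter_preimage_div_of_indepFun hindep (measurableSet_singleton _)
    (by measurability) (by measurability) htreated

end SampleSelection

theorem lee_lower_bound_general {Ω : Type*} [MeasurableSpace Ω] (P : Measure Ω)
    [IsProbabilityMeasure P]
    (Y1 Y0 : Ω → ℝ) (s1 s0 d : Ω → Bool)
    (hY1m : Measurable Y1) (hY0m : Measurable Y0)
    (hs1m : Measurable s1) (hs0m : Measurable s0) (hdm : Measurable d)
    (hY1i : Integrable Y1 P) (hY0i : Integrable Y0 P)
    (hindep : IndepFun d (fun ω => (Y1 ω, Y0 ω, s1 ω, s0 ω)) P)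
    (hD0 : 0 < P {ω | d ω = true}) (hD1 : P {ω | d ω = true} < 1)
    (hS1 : 0 < P {ω | s1 ω = true})
    (hmono : ∀ᵐ ω ∂P, s0 ω = true → s1 ω = true)
    (p0 : ℝ) (hp0 : p0 = (P {ω | s0 ω = true}).toReal / (P {ω | s1 ω = true}).toReal)
    (S : Ω → Bool) (hS : S = fun ω => if d ω then s1 ω else s0 ω)
    (Y : Ω → ℝ) (hY : Y = fun ω => if d ω then Y1 ω else Y0 ω)
    (q : ℝ)
    (hq1 : (P {ω | d ω = true ∧ S ω = true ∧ Y ω ≤ q}).toReal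
        / (P {ω | d ω = true ∧ S ω = true}).toReal = p0) :
    condMean P {ω | d ω = true ∧ S ω = true ∧ Y ω ≤ q} Y
        - condMean P {ω | d ω = false ∧ S ω = true} Y
      ≤ condMean P {ω | s1 ω = true ∧ s0 ω = true} (fun ω => Y1 ω - Y0 ω) := by
  subst hS hY hp0
  beta_reduce at hq1 ⊢
  have hW : Measurable fun ω => (Y1 ω, Y0 ω, s1 ω, s0 ω) :=
    hY1m.prodMk (hY0m.prodMk (hs1m.prodMk hs0m))
  have hcontrol : P {ω | d ω = false} ≠ 0 := by
    have hcompl : {ω | d ω = false} = {ω | d ω = true}ᶜ := by ext ω; simp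
    rw [hcompl, prob_compl_eq_one_sub (s := {ω | d ω = true})
      (hdm (measurableSet_singleton true))]
    exact (tsub_pos_of_lt hD1).ne'
  have halways : {ω | s0 ω = true} =ᵐ[P] {ω | s1 ω = true ∧ s0 ω = true} := by
    filter_upwards [hmono] with ω h
    exact propext ⟨fun h0 => ⟨h h0, h0⟩, And.right⟩
  have hmeasure : P {ω | s1 ω = true ∧ Y1 ω ≤ q} = P {ω | s1 ω = true ∧ s0 ω = true} := by
    rw [measure_treated_trimmed_div hindep hD0.ne', div_left_inj'
      (ENNReal.toReal_ne_zero.2 ⟨hS1.ne', measure_ne_top _ _⟩)] at hq1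
    rw [← measure_congr halways]
    exact (ENNReal.toReal_eq_toReal_iff' (measure_ne_top _ _) (measure_ne_top _ _)).1 hq1
  have htrim : condMean P {ω | s1 ω = true ∧ Y1 ω ≤ q} Y1
      ≤ condMean P {ω | s1 ω = true ∧ s0 ω = true} Y1 :=
    condMean_le_condMean_of_measure_eq (by measurability) (by measurability) hY1i
      (fun ω hω => hω.1.2) (fun ω hω => (not_le.1 fun h => hω.2 ⟨hω.1.1, h⟩).le) hmeasure
  rw [condMean_treated_trimmed hdm hW hindep hD0.ne', condMean_control_selected hdm hW hindep
    hcontrol, condMean_congr_ae halways, condMean_sub hY1i hY0i]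
  linarith

/-- Lower Lee bound under strong monotonicity: if `q` is the `p₀`-quantile of the
observed outcome distribution of the selected treated (with no atom at `q`), then the
always-taker average treatment effect is at least the mean of the selected treated
outcomes trimmed from above at `q`, minus the mean outcome of the selected controls. -/
theorem lee_lower_bound {Ω : Type*} [MeasurableSpace Ω] (P : Measure Ω)
    [IsProbabilityMeasure P]
    (Y1 Y0 : Ω → ℝ) (s1 s0 d : Ω → Bool)
    (hY1m : Measurable Y1) (hY0m : Measurable Y0)
    (hs1m : Measurable s1) (hs0m : Measurable s0) (hdm : Measurable d)
    (hY1i : Integrable Y1 P) (hY0i : Integrable Y0 P)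
    (hindep : IndepFun d (fun ω => (Y1 ω, Y0 ω, s1 ω, s0 ω)) P)
    (hD0 : 0 < P {ω | d ω = true}) (hD1 : P {ω | d ω = true} < 1)
    (hS1 : 0 < P {ω | s1 ω = true}) (hS0 : 0 < P {ω | s0 ω = true})
    (hmono : ∀ᵐ ω ∂P, s0 ω = true → s1 ω = true)
    (p0 : ℝ) (hp0 : p0 = (P {ω | s0 ω = true}).toReal / (P {ω | s1 ω = true}).toReal)
    (S : Ω → Bool) (hS : S = fun ω => if d ω then s1 ω else s0 ω)
    (Y : Ω → ℝ) (hY : Y = fun ω => if d ω then Y1 ω else Y0 ω)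
    (q : ℝ)
    (hq1 : (P {ω | d ω = true ∧ S ω = true ∧ Y ω ≤ q}).toReal
        / (P {ω | d ω = true ∧ S ω = true}).toReal = p0)
    (hq2 : P {ω | d ω = true ∧ S ω = true ∧ Y ω = q} = 0) :
    condMean P {ω | d ω = true ∧ S ω = true ∧ Y ω ≤ q} Y
        - condMean P {ω | d ω = false ∧ S ω = true} Y
      ≤ condMean P {ω | s1 ω = true ∧ s0 ω = true} (fun ω => Y1 ω - Y0 ω) :=
  lee_lower_bound_general P Y1 Y0 s1 s0 d hY1m hY0m hs1m hs0m hdm hY1i hY0i hindep hD0 hD1 hS1 hmono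
    p0 hp0 S hS Y hY q hq1
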